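/- arXiv:2506.11910 — 6 statements merged into one kernel-verified Lean document; each statement's English description precedes it below -/
import Mathlib

section
/- Let p be a prime number, A a commutative ring containing the element p (e.g. a Z_p-algebra), and E ∈ A[X] a monic polynomial of degree e ≥ 1 all of whose non-leading coefficients lie in p·A (for instance the image in A[X] of an Eisenstein polynomial over Z_p). Then E lies in the ideal (p, X) of A[X], the ideal power (p, X)^e is contained in the ideal (p, E), and consequently the (p,E)-adic topology and the (p,X)-adic topology on A[X] coincide. -/
/-!
Modulo `p` the polynomial `E` is `X ^ e`, so `X ^ e ∈ (p, E)` and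
`(p, X) ^ e ⊆ (p) + (X) ^ e ⊆ (p, E)`. Since also `E ∈ (p, X)` (its constant term lies in `pA`),
each of the two ideals contains a power of the other, which forces equal adic topologies.
-/

open Polynomial

namespace Ideal

variable {R : Type*} [CommRing R]

theorem sup_pow_le_sup_pow_right (I J : Ideal R) (n : ℕ) : (I ⊔ J) ^ n ≤ I ⊔ J ^ n := by
  induction n with
  | zero => simp
  | succ n ih =>
    calc (I ⊔ J) ^ (n + 1) = (I ⊔ J) ^ n * (I ⊔ J) := pow_succ _ _
      _ ≤ (I ⊔ J ^ n) * (I ⊔ J) := mul_mono_left ih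
      _ = (I * I ⊔ I * J) ⊔ (J ^ n * I ⊔ J ^ (n + 1)) := by
        rw [sup_mul, mul_sup, mul_sup, pow_succ]
      _ ≤ I ⊔ J ^ (n + 1) :=
        sup_le (le_sup_of_le_left (sup_le mul_le_left mul_le_left))
          (sup_le_sup_right mul_le_right _)

theorem adicTopology_eq_of_pow_le {I J : Ideal R} {m n : ℕ} (hIJ : I ^ m ≤ J) (hJI : J ^ n ≤ I) :
    I.adicTopology = J.adicTopology := by
  refine IsTopologicalAddGroup.ext
    I.adic_basis.toRing_subgroups_basis.toRingFilterBasis.toAddGroupFilterBasis.isTopologicalAddGroup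
    J.adic_basis.toRing_subgroups_basis.toRingFilterBasis.toAddGroupFilterBasis.isTopologicalAddGroup
    (I.hasBasis_nhds_zero_adic.ext J.hasBasis_nhds_zero_adic ?_ ?_)
  · intro k _
    refine ⟨n * k, trivial, ?_⟩
    rw [pow_mul]
    exact_mod_cast pow_right_mono hJI k
  · intro k _
    refine ⟨m * k, trivial, ?_⟩
    rw [pow_mul]
    exact_mod_cast pow_right_mono hIJ k

end Ideal

namespace Polynomial

variable {R : Type*} [CommRing R] {a : R} {f : R[X]}

theorem mem_span_C_X_of_dvd_coeff_zero (h : a ∣ f.coeff 0) : f ∈ Ideal.span {C a, X} := by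
  obtain ⟨b, hb⟩ := h
  obtain ⟨q, hq⟩ : X ∣ f - C (f.coeff 0) := X_dvd_iff.mpr (by simp)
  have hf : f = C a * C b + X * q := by rw [← hq, ← C_mul, ← hb]; ring
  rw [hf]
  exact Ideal.add_mem _ (Ideal.mul_mem_right _ _ (Ideal.subset_span (by simp)))
    (Ideal.mul_mem_right _ _ (Ideal.subset_span (by simp)))

theorem Monic.C_dvd_sub_X_pow_natDegree (hf : f.Monic) (h : ∀ i < f.natDegree, a ∣ f.coeff i) :
    C a ∣ f - X ^ f.natDegree := by
  rw [C_dvd_iff_dvd_coeff]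
  intro i
  rcases lt_trichotomy i f.natDegree with hi | rfl | hi
  · simpa [coeff_X_pow, hi.ne] using h i hi
  · simp [hf.coeff_natDegree]
  · simp [coeff_X_pow, hi.ne', coeff_eq_zero_of_natDegree_lt hi]

theorem Monic.X_pow_natDegree_mem_span_C (hf : f.Monic) (h : ∀ i < f.natDegree, a ∣ f.coeff i) :
    X ^ f.natDegree ∈ Ideal.span {C a, f} := by
  obtain ⟨q, hq⟩ := hf.C_dvd_sub_X_pow_natDegree h
  rw [show X ^ f.natDegree = f - C a * q by rw [← hq]; ring]
  exact Ideal.sub_mem _ (Ideal.subset_span (by simp))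
    (Ideal.mul_mem_right _ _ (Ideal.subset_span (by simp)))

theorem Monic.span_C_X_pow_natDegree_le (hf : f.Monic) (h : ∀ i < f.natDegree, a ∣ f.coeff i) :
    Ideal.span {C a, X} ^ f.natDegree ≤ Ideal.span {C a, f} := by
  rw [Ideal.span_insert]
  refine (Ideal.sup_pow_le_sup_pow_right _ _ _).trans (sup_le ?_ ?_)
  · exact Ideal.span_mono (by simp)
  · rw [Ideal.span_singleton_pow, Ideal.span_singleton_le_iff_mem]
    exact hf.X_pow_natDegree_mem_span_C h

end Polynomial

theorem eisenstein_mem_span_and_span_pow_le_and_adicTopology_eq_general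
    {A : Type*} [CommRing A] (p : ℕ)
    (E : Polynomial A) (hE : E.Monic) (e : ℕ) (hdeg : E.natDegree = e) (he : 1 ≤ e)
    (hcoeff : ∀ i < e, E.coeff i ∈ Ideal.span ({(p : A)} : Set A)) :
    E ∈ Ideal.span ({(p : A[X]), X} : Set A[X]) ∧
      Ideal.span ({(p : A[X]), X} : Set A[X]) ^ e ≤ Ideal.span ({(p : A[X]), E} : Set A[X]) ∧
      (Ideal.span ({(p : A[X]), E} : Set A[X])).adicTopology =
        (Ideal.span ({(p : A[X]), X} : Set A[X])).adicTopology := by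
  subst hdeg
  have hdvd (i : ℕ) (hi : i < E.natDegree) : (p : A) ∣ E.coeff i :=
    Ideal.mem_span_singleton.mp (hcoeff i hi)
  rw [← map_natCast C p]
  have hE_mem : E ∈ Ideal.span {C (p : A), X} := mem_span_C_X_of_dvd_coeff_zero (hdvd 0 he)
  have hpow_le := hE.span_C_X_pow_natDegree_le hdvd
  have hle : Ideal.span {C (p : A), E} ≤ Ideal.span {C (p : A), X} := by
    rw [Ideal.span_le, Set.insert_subset_iff, Set.singleton_subset_iff]
    exact ⟨Ideal.subset_span (by simp), hE_mem⟩
  exact ⟨hE_mem, hpow_le, Ideal.adicTopology_eq_of_pow_le (m := 1) (by rwa [pow_one]) hpow_le⟩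

/-- Let `p` be a prime, `A` a commutative ring, and `E ∈ A[X]` a monic polynomial of
degree `e ≥ 1` all of whose non-leading coefficients lie in `p·A`.  Then `E` lies in the
ideal `(p, X)`, `(p, X)^e ⊆ (p, E)`, and the `(p,E)`-adic and `(p,X)`-adic topologies on
`A[X]` coincide. -/
theorem eisenstein_mem_span_and_span_pow_le_and_adicTopology_eq
    {A : Type*} [CommRing A] (p : ℕ) (hp : p.Prime)
    (E : Polynomial A) (hE : E.Monic) (e : ℕ) (hdeg : E.natDegree = e) (he : 1 ≤ e)
    (hcoeff : ∀ i < e, E.coeff i ∈ Ideal.span ({(p : A)} : Set A)) :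
    E ∈ Ideal.span ({(p : A[X]), X} : Set A[X]) ∧
      Ideal.span ({(p : A[X]), X} : Set A[X]) ^ e ≤ Ideal.span ({(p : A[X]), E} : Set A[X]) ∧
      (Ideal.span ({(p : A[X]), E} : Set A[X])).adicTopology =
        (Ideal.span ({(p : A[X]), X} : Set A[X])).adicTopology :=
  eisenstein_mem_span_and_span_pow_le_and_adicTopology_eq_general p E hE e hdeg he hcoeff
end

section
/- Let p be a prime number and A a commutative ring. There is a ring isomorphism between the (p,X)-adic completion of the polynomial ring A[X], i.e. the inverse limit over n of A[X]/(p,X)^n, and the power series ring over the p-adic completion of A, i.e. (lim_n A/p^n A)⟦X⟧, and this isomorphism is compatible with the canonical maps from A[X] to both sides. -/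
/-!
The `n`-th power of the ideal `(I, X)` of `A[X]` consists exactly of the polynomials whose
`k`-th coefficient lies in `I ^ (n - k)`. So a class in `A[X] ⧸ (I, X) ^ n` is the same as the
classes of its coefficients `a_k` modulo `I ^ (n - k)`, and a compatible family of such classes
is a power series whose `k`-th coefficient is a compatible family modulo the powers of `I`.

In the direction `Â⟦X⟧ → lim A[X] ⧸ (I, X) ^ n` the map is `F ↦ (trunc n F mod (I, X) ^ n)_n`;
it is multiplicative because `X ^ n ∈ (I, X) ^ n`, and the coefficient description of
`(I, X) ^ n` makes it bijective.
-/

open Polynomial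

theorem AdicCompletion.factorPow_evalₐ {R : Type*} [CommRing R] (I : Ideal R) {m n : ℕ}
    (hmn : m ≤ n) (x : AdicCompletion I R) :
    Ideal.Quotient.factorPow I hmn (evalₐ I n x) = evalₐ I m x := by
  obtain ⟨s, rfl⟩ := AdicCompletion.mk_surjective I R x
  simp only [evalₐ_mk, Ideal.Quotient.factor_mk]
  rw [Ideal.Quotient.eq]
  simpa [SModEq.sub_mem] using (s.prop hmn).symm

instance Ideal.Quotient.subsingleton_pow_zero {R : Type*} [CommRing R] (I : Ideal R) :
    Subsingleton (R ⧸ I ^ 0) :=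
  Ideal.Quotient.subsingleton_iff.2 (by simp)

namespace PowerSeries

variable {R S : Type*} [CommRing R] [Semiring S] {n : ℕ} {ρ : R[X] →+* S}

theorem map_trunc_coe_of_map_X_pow_eq_zero (hρ : ρ (Polynomial.X ^ n) = 0) (P : R[X]) :
    ρ (trunc n P) = ρ P := by
  obtain ⟨Q, hQ⟩ : Polynomial.X ^ n ∣ P - trunc n P := by
    refine Polynomial.X_pow_dvd_iff.2 fun d hd => ?_
    simp [coeff_trunc, hd]
  rw [sub_eq_iff_eq_add'] at hQ
  conv_rhs => rw [hQ, map_add, map_mul, hρ, zero_mul, add_zero]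

noncomputable def truncLift (n : ℕ) (ρ : R[X] →+* S) (hρ : ρ (Polynomial.X ^ n) = 0) :
    R⟦X⟧ →+* S where
  toFun F := ρ (trunc n F)
  map_one' := by
    rw [← Polynomial.coe_one, map_trunc_coe_of_map_X_pow_eq_zero hρ, map_one]
  map_mul' F G := by
    rw [← trunc_trunc_mul_trunc, ← Polynomial.coe_mul, map_trunc_coe_of_map_X_pow_eq_zero hρ,
      map_mul]
  map_zero' := by simp
  map_add' F G := by simp

theorem truncLift_apply (hρ : ρ (Polynomial.X ^ n) = 0) (F : R⟦X⟧) :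
    truncLift n ρ hρ F = ρ (trunc n F) :=
  rfl

end PowerSeries

noncomputable def Ideal.mapCSupSpanX {A : Type*} [CommRing A] (I : Ideal A) : Ideal A[X] :=
  I.map C ⊔ Ideal.span {X}

theorem Ideal.mapCSupSpanX_span_singleton {A : Type*} [CommRing A] (a : A) :
    (Ideal.span {a}).mapCSupSpanX = Ideal.span {C a, X} := by
  rw [Ideal.mapCSupSpanX, Ideal.map_span, Set.image_singleton, Ideal.span_insert]

namespace Polynomial

variable {A : Type*} [CommRing A] (I : Ideal A)

theorem coeff_mul_mem_pow_sub {m n : ℕ} {f g : A[X]} (hf : ∀ k, f.coeff k ∈ I ^ (m - k))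
    (hg : ∀ k, g.coeff k ∈ I ^ (n - k)) (k : ℕ) : (f * g).coeff k ∈ I ^ (m + n - k) := by
  rw [coeff_mul]
  refine Ideal.sum_mem _ fun ij hij => ?_
  have hk := Finset.HasAntidiagonal.mem_antidiagonal.1 hij
  refine Ideal.pow_le_pow_right (show m + n - k ≤ m - ij.1 + (n - ij.2) by omega) ?_
  rw [pow_add]
  exact Ideal.mul_mem_mul (hf _) (hg _)

def coeffFiltration (n : ℕ) : Ideal A[X] where
  carrier := {f | ∀ k, f.coeff k ∈ I ^ (n - k)}
  add_mem' hf hg k := by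
    rw [coeff_add]
    exact add_mem (hf k) (hg k)
  zero_mem' k := by
    rw [coeff_zero]
    exact zero_mem _
  smul_mem' c f hf k := by
    simpa using coeff_mul_mem_pow_sub I (m := 0) (f := c) (fun _ => by simp) hf k

@[simp]
theorem mem_coeffFiltration {n : ℕ} {f : A[X]} :
    f ∈ coeffFiltration I n ↔ ∀ k, f.coeff k ∈ I ^ (n - k) :=
  Iff.rfl

theorem coeffFiltration_mul_le (m n : ℕ) :
    coeffFiltration I m * coeffFiltration I n ≤ coeffFiltration I (m + n) :=
  Submodule.mul_le.2 fun _ hf _ hg => coeff_mul_mem_pow_sub I hf hg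

theorem mapCSupSpanX_le_coeffFiltration_one : I.mapCSupSpanX ≤ coeffFiltration I 1 := by
  refine sup_le (fun f hf k => ?_) (Ideal.span_le.2 ?_)
  · exact Ideal.pow_le_pow_right (Nat.sub_le 1 k) (by simpa using Ideal.mem_map_C_iff.1 hf k)
  · rintro _ rfl k
    rcases k with _ | k <;> simp [coeff_X]

theorem mapCSupSpanX_pow_le_coeffFiltration (n : ℕ) :
    I.mapCSupSpanX ^ n ≤ coeffFiltration I n := by
  induction n with
  | zero => intro f _ k; simp
  | succ n ih =>
    rw [pow_succ]
    exact (Ideal.mul_mono ih (mapCSupSpanX_le_coeffFiltration_one I)).trans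
      (coeffFiltration_mul_le I n 1)

theorem X_pow_mem_mapCSupSpanX_pow (n : ℕ) : (X : A[X]) ^ n ∈ I.mapCSupSpanX ^ n :=
  Ideal.pow_mem_pow (Ideal.mem_sup_right (Ideal.mem_span_singleton_self X)) n

theorem map_C_pow_le_mapCSupSpanX_pow (n : ℕ) : (I ^ n).map C ≤ I.mapCSupSpanX ^ n := by
  rw [Ideal.map_pow]
  exact Ideal.pow_right_mono le_sup_left n

theorem coeffFiltration_le_mapCSupSpanX_pow (n : ℕ) :
    coeffFiltration I n ≤ I.mapCSupSpanX ^ n := by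
  intro f hf
  rw [← sum_C_mul_X_pow_eq f, sum_def]
  refine Ideal.sum_mem _ fun k _ => ?_
  obtain hnk | hkn := le_or_gt n k
  · exact Ideal.mul_mem_left _ _
      (Ideal.pow_le_pow_right hnk (X_pow_mem_mapCSupSpanX_pow I k))
  · have hC : C (f.coeff k) ∈ I.mapCSupSpanX ^ (n - k) :=
      map_C_pow_le_mapCSupSpanX_pow I _ (Ideal.mem_map_of_mem _ (hf k))
    simpa [← pow_add, Nat.sub_add_cancel hkn.le] using
      Ideal.mul_mem_mul hC (X_pow_mem_mapCSupSpanX_pow I k)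

theorem mapCSupSpanX_pow_eq_coeffFiltration (n : ℕ) :
    I.mapCSupSpanX ^ n = coeffFiltration I n :=
  (mapCSupSpanX_pow_le_coeffFiltration I n).antisymm (coeffFiltration_le_mapCSupSpanX_pow I n)

theorem mk_mapCSupSpanX_pow_eq_mk_iff {n : ℕ} {f g : A[X]} :
    Ideal.Quotient.mk (I.mapCSupSpanX ^ n) f = Ideal.Quotient.mk (I.mapCSupSpanX ^ n) g ↔
      ∀ k, Ideal.Quotient.mk (I ^ (n - k)) (f.coeff k) =
        Ideal.Quotient.mk (I ^ (n - k)) (g.coeff k) := by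
  simp only [Ideal.Quotient.eq, mapCSupSpanX_pow_eq_coeffFiltration, mem_coeffFiltration,
    coeff_sub]

end Polynomial

namespace PowerSeries

open AdicCompletion

variable {A : Type*} [CommRing A] (I : Ideal A)

noncomputable def quotientPolynomialToQuotientPow (n : ℕ) :
    (A ⧸ I ^ n)[X] →+* A[X] ⧸ I.mapCSupSpanX ^ n :=
  (Ideal.Quotient.factor (map_C_pow_le_mapCSupSpanX_pow I n)).comp
    (I ^ n).polynomialQuotientEquivQuotientPolynomial.toRingHom

theorem quotientPolynomialToQuotientPow_map_mk (n : ℕ) (P : A[X]) :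
    quotientPolynomialToQuotientPow I n (P.map (Ideal.Quotient.mk (I ^ n))) =
      Ideal.Quotient.mk (I.mapCSupSpanX ^ n) P := by
  simp [quotientPolynomialToQuotientPow, Ideal.polynomialQuotientEquivQuotientPolynomial_map_mk]

theorem quotientPolynomialToQuotientPow_X_pow (n : ℕ) :
    quotientPolynomialToQuotientPow I n (Polynomial.X ^ n) = 0 := by
  rw [← Polynomial.map_X (Ideal.Quotient.mk (I ^ n)), ← Polynomial.map_pow,
    quotientPolynomialToQuotientPow_map_mk, Ideal.Quotient.eq_zero_iff_mem]
  exact X_pow_mem_mapCSupSpanX_pow I n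

noncomputable def toQuotientPow (n : ℕ) :
    (AdicCompletion I A)⟦X⟧ →+* A[X] ⧸ I.mapCSupSpanX ^ n :=
  (truncLift n _ (quotientPolynomialToQuotientPow_X_pow I n)).comp
    (PowerSeries.map (evalₐ I n : AdicCompletion I A →+* A ⧸ I ^ n))

theorem toQuotientPow_eq_mk_iff {n : ℕ} (F : (AdicCompletion I A)⟦X⟧) (P : A[X]) :
    toQuotientPow I n F = Ideal.Quotient.mk (I.mapCSupSpanX ^ n) P ↔
      ∀ k, evalₐ I (n - k) (coeff k F) = Ideal.Quotient.mk (I ^ (n - k)) (P.coeff k) := by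
  obtain ⟨Q, hQ⟩ := Polynomial.map_surjective _ Ideal.Quotient.mk_surjective
    (trunc n (PowerSeries.map (evalₐ I n : AdicCompletion I A →+* A ⧸ I ^ n) F))
  have hF : toQuotientPow I n F = Ideal.Quotient.mk (I.mapCSupSpanX ^ n) Q := by
    rw [toQuotientPow, RingHom.comp_apply, truncLift_apply, ← hQ,
      quotientPolynomialToQuotientPow_map_mk]
  rw [hF, mk_mapCSupSpanX_pow_eq_mk_iff]
  refine forall_congr' fun k => ?_
  obtain hkn | hnk := lt_or_ge k n
  · have hQk : Ideal.Quotient.mk (I ^ n) (Q.coeff k) = evalₐ I n (coeff k F) := by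
      simpa [coeff_trunc, hkn] using congrArg (Polynomial.coeff · k) hQ
    rw [← factorPow_evalₐ I (Nat.sub_le n k), ← hQk, Ideal.Quotient.factor_mk, eq_comm]
  · -- both sides live in `A ⧸ I ^ 0`, the zero ring
    rw [Nat.sub_eq_zero_of_le hnk]
    exact iff_of_true (Subsingleton.elim _ _) (Subsingleton.elim _ _)

theorem factorPow_comp_toQuotientPow {m n : ℕ} (hmn : m ≤ n) :
    (Ideal.Quotient.factorPow I.mapCSupSpanX hmn).comp (toQuotientPow I n) =
      toQuotientPow I m := by
  ext F
  obtain ⟨P, hP⟩ := Ideal.Quotient.mk_surjective (toQuotientPow I n F)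
  rw [RingHom.comp_apply, ← hP, Ideal.Quotient.factor_mk, eq_comm, toQuotientPow_eq_mk_iff]
  intro k
  rw [← factorPow_evalₐ I (Nat.sub_le_sub_right hmn k),
    (toQuotientPow_eq_mk_iff I F P).1 hP.symm k, Ideal.Quotient.factor_mk]

noncomputable def toAdicCompletion :
    (AdicCompletion I A)⟦X⟧ →+* AdicCompletion I.mapCSupSpanX A[X] :=
  liftRingHom _ (toQuotientPow I) (factorPow_comp_toQuotientPow I)

theorem evalₐ_toAdicCompletion (n : ℕ) (F : (AdicCompletion I A)⟦X⟧) :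
    evalₐ _ n (toAdicCompletion I F) = toQuotientPow I n F :=
  evalₐ_liftRingHom _ _ _ n F

theorem toAdicCompletion_injective : Function.Injective (toAdicCompletion I) := by
  refine (injective_iff_map_eq_zero _).2 fun F hF => ext fun k => ext_evalₐ fun m => ?_
  have h := evalₐ_toAdicCompletion I (m + k) F
  rw [hF, _root_.map_zero, ← _root_.map_zero (Ideal.Quotient.mk _), eq_comm,
    toQuotientPow_eq_mk_iff] at h
  have hk := h k
  rw [Nat.add_sub_cancel] at hk
  simpa using hk

theorem toAdicCompletion_surjective : Function.Surjective (toAdicCompletion I) := by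
  intro x
  choose g hg using fun N => Ideal.Quotient.mk_surjective (evalₐ I.mapCSupSpanX N x)
  have hcauchy {M N : ℕ} (hMN : M ≤ N) :
      Ideal.Quotient.mk (I.mapCSupSpanX ^ M) (g N) = Ideal.Quotient.mk _ (g M) := by
    rw [hg, ← Ideal.Quotient.factor_mk (Ideal.pow_le_pow_right hMN), hg, factorPow_evalₐ _ hMN]
  have hc (k m : ℕ) :
      (g (m + k)).coeff k ≡ (g (m + 1 + k)).coeff k [SMOD (I ^ m • ⊤ : Ideal A)] := by
    have := (mk_mapCSupSpanX_pow_eq_mk_iff I).1 (hcauchy (by omega : m + k ≤ m + 1 + k)) k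
    rw [Nat.add_sub_cancel, Ideal.Quotient.eq] at this
    simpa [SModEq.sub_mem] using neg_mem this
  refine ⟨PowerSeries.mk fun k =>
    AdicCompletion.mk I A (AdicCauchySequence.mk I A _ (hc k)), ext_evalₐ fun n => ?_⟩
  rw [evalₐ_toAdicCompletion, ← hg, toQuotientPow_eq_mk_iff]
  intro k
  obtain hkn | hnk := le_or_gt k n
  · rw [coeff_mk, evalₐ_mk, AdicCauchySequence.mk_coe, Nat.sub_add_cancel hkn]
  · rw [Nat.sub_eq_zero_of_le hnk.le]
    exact Subsingleton.elim _ _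

theorem toAdicCompletion_map_algebraMap (f : A[X]) :
    toAdicCompletion I (PowerSeries.map (algebraMap A (AdicCompletion I A)) f) =
      algebraMap A[X] (AdicCompletion I.mapCSupSpanX A[X]) f := by
  refine ext_evalₐ fun n => ?_
  rw [evalₐ_toAdicCompletion, AlgHom.commutes, Ideal.Quotient.algebraMap_eq,
    toQuotientPow_eq_mk_iff]
  intro k
  simp

end PowerSeries

namespace AdicCompletion

open PowerSeries

variable {A : Type*} [CommRing A] (I : Ideal A)

noncomputable def polynomialEquivPowerSeries :
    AdicCompletion I.mapCSupSpanX A[X] ≃+* (AdicCompletion I A)⟦X⟧ :=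
  (RingEquiv.ofBijective _ ⟨toAdicCompletion_injective I, toAdicCompletion_surjective I⟩).symm

theorem polynomialEquivPowerSeries_algebraMap (f : A[X]) :
    polynomialEquivPowerSeries I (algebraMap A[X] _ f) =
      PowerSeries.map (algebraMap A (AdicCompletion I A)) f := by
  rw [polynomialEquivPowerSeries, RingEquiv.symm_apply_eq, ← toAdicCompletion_map_algebraMap]
  rfl

end AdicCompletion

theorem adicCompletion_polynomial_span_p_X_ringEquiv_powerSeries_general
    {A : Type*} [CommRing A] (p : ℕ) :
    ∃ e : AdicCompletion (Ideal.span ({(p : A[X]), X} : Set A[X])) A[X] ≃+*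
        PowerSeries (AdicCompletion (Ideal.span ({(p : A)} : Set A)) A),
      ∀ f : A[X],
        e (algebraMap A[X] (AdicCompletion (Ideal.span ({(p : A[X]), X} : Set A[X])) A[X]) f) =
          PowerSeries.map
            (algebraMap A (AdicCompletion (Ideal.span ({(p : A)} : Set A)) A))
            (f : PowerSeries A) := by
  rw [← map_natCast C p, ← Ideal.mapCSupSpanX_span_singleton]
  exact ⟨_, AdicCompletion.polynomialEquivPowerSeries_algebraMap _⟩

/-- The `(p,X)`-adic completion of `A[X]` (the inverse limit of the `A[X]/(p,X)^n`) is
ring-isomorphic to the power series ring over the `p`-adic completion of `A`, compatibly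
with the canonical maps from `A[X]` to both sides. -/
theorem adicCompletion_polynomial_span_p_X_ringEquiv_powerSeries
    {A : Type*} [CommRing A] (p : ℕ) (hp : p.Prime) :
    ∃ e : AdicCompletion (Ideal.span ({(p : A[X]), X} : Set A[X])) A[X] ≃+*
        PowerSeries (AdicCompletion (Ideal.span ({(p : A)} : Set A)) A),
      ∀ f : A[X],
        e (algebraMap A[X] (AdicCompletion (Ideal.span ({(p : A[X]), X} : Set A[X])) A[X]) f) =
          PowerSeries.map
            (algebraMap A (AdicCompletion (Ideal.span ({(p : A)} : Set A)) A))
            (f : PowerSeries A) :=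
  adicCompletion_polynomial_span_p_X_ringEquiv_powerSeries_general p
end

section
/- Let p be a prime number and R a commutative ring that is p-adically complete and separated, i.e. the natural map R → lim_n R/p^n R is bijective. Then: (a) for every n ≥ 1 the inclusion of the polynomial ring R[X] into the power series ring R⟦X⟧ induces a ring isomorphism R[X]/((X+p)^n) ≅ R⟦X⟧/((X+p)^n); and (b) R⟦X⟧ is (X+p)-adically complete and separated, i.e. the natural map R⟦X⟧ → lim_n R⟦X⟧/((X+p)^n) is bijective. Equivalently, R⟦X⟧, with its natural map from R[X], is the (X+p)-adic completion of R[X]. -/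
/-!
Part (a) is Weierstrass division by the distinguished polynomial `(X + p) ^ n`.

For (b): `R⟦X⟧` is adically complete for the ideal `(p, X)` of series with constant term in
`(p)`, because its `m`-th power consists of the series whose `k`-th coefficient lies in
`p ^ (m - k) R`, so limits can be taken coefficientwise in `R`. Completeness for an ideal `J`
passes to every principal ideal `(f) ⊆ J`: a sequence with steps `s (m + 1) - s m = f ^ m * z m`
converges to `s 0 + ∑ f ^ m * z m`, whose difference with `s n` is `f ^ n` times a convergent
tail.
-/

section AdicComplete

variable {A : Type*} [CommRing A] {J : Ideal A}

theorem isHausdorff_self_iff :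
    IsHausdorff J A ↔ ∀ x : A, (∀ n : ℕ, x ∈ J ^ n) → x = 0 := by
  simp only [isHausdorff_iff, smul_eq_mul, Ideal.mul_top, SModEq.zero]

theorem isPrecomplete_self_iff :
    IsPrecomplete J A ↔ ∀ s : ℕ → A, (∀ {m n : ℕ}, m ≤ n → s m - s n ∈ J ^ m) →
      ∃ L : A, ∀ n, s n - L ∈ J ^ n := by
  simp only [isPrecomplete_iff, smul_eq_mul, Ideal.mul_top, SModEq.sub_mem]

/-- The solution is `W n = ∑ i, f ^ i * z (n + i)`. -/
theorem IsAdicComplete.exists_eq_add_mul_succ [IsAdicComplete J A] {f : A} (hf : f ∈ J)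
    (z : ℕ → A) : ∃ W : ℕ → A, ∀ n, W n = z n + f * W (n + 1) := by
  set T : ℕ → ℕ → A := fun n M => ∑ i ∈ Finset.range M, f ^ i * z (n + i)
  have hT : ∀ n {M M' : ℕ}, M ≤ M' → T n M - T n M' ∈ J ^ M := by
    intro n M M' h
    rw [← neg_sub, ← Finset.sum_Ico_eq_sub _ h, neg_mem_iff]
    refine Ideal.sum_mem _ fun i hi => Ideal.mul_mem_right _ _ ?_
    exact Ideal.pow_le_pow_right (Finset.mem_Ico.mp hi).1 (Ideal.pow_mem_pow hf i)
  choose W hW using fun n => isPrecomplete_self_iff.mp inferInstance (T n) (hT n)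
  refine ⟨W, fun n => ?_⟩
  have hstep : ∀ M, T n (M + 1) = z n + f * T (n + 1) M := by
    intro M
    simp only [T, Finset.sum_range_succ', Finset.mul_sum]
    refine (add_comm _ _).trans (congrArg₂ _ (by simp) (Finset.sum_congr rfl fun i _ => ?_))
    rw [show n + (i + 1) = n + 1 + i by omega]
    ring
  rw [← sub_eq_zero]
  refine (isHausdorff_self_iff (J := J)).mp inferInstance _ fun M => ?_
  have hsplit : W n - (z n + f * W (n + 1))
      = -(T n (M + 1) - W n) + f * (T (n + 1) M - W (n + 1)) := by
    rw [hstep]; ring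
  rw [hsplit]
  refine Ideal.add_mem _ (neg_mem (Ideal.pow_le_pow_right M.le_succ (hW n (M + 1)))) ?_
  exact Ideal.pow_le_pow_right M.le_succ (pow_succ' J M ▸ Ideal.mul_mem_mul hf (hW (n + 1) M))

theorem IsAdicComplete.span_singleton_of_mem [IsAdicComplete J A] {f : A} (hf : f ∈ J) :
    IsAdicComplete (Ideal.span {f}) A := by
  have hle : ∀ n, Ideal.span {f} ^ n ≤ J ^ n :=
    Ideal.pow_right_mono ((Ideal.span_singleton_le_iff_mem J).mpr hf)
  refine (isAdicComplete_iff _ _).mpr ⟨isHausdorff_self_iff.mpr fun x hx =>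
    isHausdorff_self_iff.mp inferInstance x fun n => hle n (hx n),
    isPrecomplete_self_iff.mpr fun s hs => ?_⟩
  simp only [Ideal.span_singleton_pow, Ideal.mem_span_singleton] at hs ⊢
  choose z hz using fun m : ℕ => dvd_sub_comm.mp (hs m.le_succ)
  obtain ⟨W, hW⟩ := IsAdicComplete.exists_eq_add_mul_succ hf z
  have hconst : ∀ n, s n + f ^ n * W n = s 0 + W 0 := by
    intro n
    induction n with
    | zero => ring
    | succ n ih => rw [← ih, hW n, eq_add_of_sub_eq' (hz n)]; ring
  exact ⟨s 0 + W 0, fun n => ⟨-W n, by rw [← hconst n]; ring⟩⟩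

end AdicComplete

namespace PowerSeries

variable {R : Type*} [CommRing R] {I : Ideal R}

theorem coeff_mul_mem_pow {f g : R⟦X⟧} {a b : ℕ} (hf : ∀ i, coeff i f ∈ I ^ (a - i))
    (hg : ∀ j, coeff j g ∈ I ^ (b - j)) (k : ℕ) : coeff k (f * g) ∈ I ^ (a + b - k) := by
  rw [coeff_mul]
  refine Ideal.sum_mem _ fun ⟨i, j⟩ hij => ?_
  rw [Finset.HasAntidiagonal.mem_antidiagonal] at hij
  have hmem := Ideal.mul_mem_mul (hf i) (hg j)
  rw [← pow_add] at hmem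
  exact Ideal.pow_le_pow_right (by omega) hmem

theorem mem_comap_constantCoeff_pow_iff {m : ℕ} {f : R⟦X⟧} :
    f ∈ I.comap constantCoeff ^ m ↔ ∀ k, coeff k f ∈ I ^ (m - k) := by
  induction m generalizing f with
  | zero => simp
  | succ m ih =>
    constructor
    · intro hf
      rw [pow_succ'] at hf
      refine Submodule.mul_induction_on hf (fun x hx y hy k => ?_)
        fun x y hx hy k => by simpa only [map_add] using Ideal.add_mem _ (hx k) (hy k)
      have hx' : ∀ i, coeff i x ∈ I ^ (1 - i) := by
        rintro (_ | i)
        · simpa using hx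
        · simp
      simpa only [add_comm 1 m] using coeff_mul_mem_pow hx' (ih.mp hy) k
    · intro hf
      rw [eq_X_mul_shift_add_const f]
      refine Ideal.add_mem _ (pow_succ' (I.comap constantCoeff) m ▸
        Ideal.mul_mem_mul (by simp) (ih.mpr fun k => ?_)) ?_
      · simpa [coeff_mk] using hf (k + 1)
      · have hC : Ideal.map C (I ^ (m + 1)) ≤ I.comap constantCoeff ^ (m + 1) := by
          rw [Ideal.map_pow]
          refine Ideal.pow_right_mono (Ideal.map_le_iff_le_comap.mpr fun r hr => ?_) _
          simpa using hr
        exact hC (Ideal.mem_map_of_mem C (by simpa using hf 0))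

theorem isAdicComplete_comap_constantCoeff [IsAdicComplete I R] :
    IsAdicComplete (I.comap constantCoeff) R⟦X⟧ := by
  refine (isAdicComplete_iff _ _).mpr ⟨isHausdorff_self_iff.mpr fun f hf => ?_,
    isPrecomplete_self_iff.mpr fun s hs => ?_⟩
  · ext k
    refine (isHausdorff_self_iff (J := I)).mp inferInstance _ fun n => ?_
    simpa using mem_comap_constantCoeff_pow_iff.mp (hf (n + k)) k
  · have hcoeff : ∀ k {m n : ℕ}, m ≤ n →
        coeff k (s (m + k)) - coeff k (s (n + k)) ∈ I ^ m := by
      intro k m n h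
      simpa [map_sub] using mem_comap_constantCoeff_pow_iff.mp (hs (by omega : m + k ≤ n + k)) k
    choose L hL using fun k => (isPrecomplete_self_iff (J := I)).mp inferInstance _ (hcoeff k)
    refine ⟨mk L, fun n => mem_comap_constantCoeff_pow_iff.mpr fun k => ?_⟩
    rcases le_or_gt k n with hkn | hkn
    · simpa [Nat.sub_add_cancel hkn] using hL k (n - k)
    · simp [Nat.sub_eq_zero_of_le hkn.le]

end PowerSeries

theorem Polynomial.isDistinguishedAt_X_add_C_pow {R : Type*} [CommRing R] {I : Ideal R} {a : R}
    (ha : a ∈ I) (n : ℕ) : ((X + C a) ^ n).IsDistinguishedAt I := by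
  have h : (X + C a).IsDistinguishedAt I := by
    refine ⟨⟨fun {k} hk => ?_⟩, monic_X_add_C a⟩
    have hdeg : (X + C a).natDegree ≤ 1 := by compute_degree
    obtain rfl : k = 0 := by omega
    simpa using ha
  induction n with
  | zero => exact ⟨⟨fun hk => by simp at hk⟩, monic_one⟩
  | succ n ih => exact pow_succ (X + C a) n ▸ ih.mul h

theorem powerSeries_isAdicComplete_X_add_p_general
    {R : Type*} [CommRing R] (p : ℕ)
    (hR : IsAdicComplete (Ideal.span ({(p : R)} : Set R)) R) :
    (∀ n : ℕ, 1 ≤ n →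
      ∃ e : (Polynomial R ⧸
              Ideal.span ({(Polynomial.X + (p : Polynomial R)) ^ n} : Set (Polynomial R))) ≃+*
            (PowerSeries R ⧸
              Ideal.span ({(PowerSeries.X + (p : PowerSeries R)) ^ n} : Set (PowerSeries R))),
        ∀ f : Polynomial R,
          e (Ideal.Quotient.mk _ f) = Ideal.Quotient.mk _ (f : PowerSeries R)) ∧
    IsAdicComplete (Ideal.span ({PowerSeries.X + (p : PowerSeries R)} : Set (PowerSeries R)))
      (PowerSeries R) := by
  have hp : (p : R) ∈ Ideal.span {(p : R)} := Ideal.mem_span_singleton_self _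
  refine ⟨fun n _ => ?_, ?_⟩
  · have H := Polynomial.isDistinguishedAt_X_add_C_pow hp n
    rw [← map_natCast Polynomial.C p]
    have hcoe : (((Polynomial.X + Polynomial.C (p : R)) ^ n : Polynomial R) : PowerSeries R)
        = (PowerSeries.X + (p : PowerSeries R)) ^ n := by
      rw [Polynomial.coe_pow, Polynomial.coe_add, Polynomial.coe_X, Polynomial.coe_C, map_natCast]
    exact ⟨H.algEquivQuotient.toRingEquiv.trans (Ideal.quotEquivOfEq (by rw [hcoe])),
      fun f => rfl⟩
  · have hX : PowerSeries.X + (p : PowerSeries R) ∈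
        (Ideal.span {(p : R)}).comap PowerSeries.constantCoeff := by
      simp
    exact PowerSeries.isAdicComplete_comap_constantCoeff.span_singleton_of_mem hX

/-- For a `p`-adically complete and separated commutative ring `R`:
(a) for every `n ≥ 1`, the inclusion `R[X] → R⟦X⟧` induces a ring isomorphism
`R[X]/((X+p)^n) ≅ R⟦X⟧/((X+p)^n)`, and
(b) `R⟦X⟧` is `(X+p)`-adically complete and separated. -/
theorem powerSeries_isAdicComplete_X_add_p
    {R : Type*} [CommRing R] (p : ℕ) (hp : p.Prime)
    (hR : IsAdicComplete (Ideal.span ({(p : R)} : Set R)) R) :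
    (∀ n : ℕ, 1 ≤ n →
      ∃ e : (Polynomial R ⧸
              Ideal.span ({(Polynomial.X + (p : Polynomial R)) ^ n} : Set (Polynomial R))) ≃+*
            (PowerSeries R ⧸
              Ideal.span ({(PowerSeries.X + (p : PowerSeries R)) ^ n} : Set (PowerSeries R))),
        ∀ f : Polynomial R,
          e (Ideal.Quotient.mk _ f) = Ideal.Quotient.mk _ (f : PowerSeries R)) ∧
    IsAdicComplete (Ideal.span ({PowerSeries.X + (p : PowerSeries R)} : Set (PowerSeries R)))
      (PowerSeries R) :=
  powerSeries_isAdicComplete_X_add_p_general p hR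
end

section
/- Let p ≥ 2 and r ≥ 1 be integers, let d ≥ 0 be a real number, and set e = p^r − 1. Let β_0, …, β_{r−1} be real numbers such that for every j, either d+1 < β_j < p−d−1 or −p+d+1 < β_j < −d−1. Then there exists an integer m such that m + d/p < (∑_{j=0}^{r−1} β_j·p^j)/e < m + 1 − d/p. -/
/-!
Give each digit a carry `c_j ∈ {0, 1}` so that `β_j + c_j p ∈ (d + 1, p - d - 1)`. Since
`p^r ≡ 1 (mod e)`, the carry out of the top digit re-enters at the bottom: up to the integer
`c_{r-1} e`, the sum `∑ β_j p^j` equals `∑ δ_j p^j` with `δ_j = β_j + c_j p - c_{j-1}`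
(indices mod `r`), and every `δ_j` lies in `(d, p - 1 - d)`. Dividing by `e = (p - 1) ∑ p^j`
exhibits `∑ δ_j p^j / e` as a weighted average of the `δ_j / (p - 1)`, so it lies in
`(d / (p - 1), 1 - d / (p - 1)) ⊆ (d / p, 1 - d / p)`.
-/

open Finset

theorem exists_carry {lo hi b p : ℝ} (h : (lo < b ∧ b < hi) ∨ (lo - p < b ∧ b < hi - p)) :
    ∃ c : ℤ, 0 ≤ c ∧ c ≤ 1 ∧ lo < b + c * p ∧ b + c * p < hi := by
  rcases h with ⟨hlo, hhi⟩ | ⟨hlo, hhi⟩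
  · exact ⟨0, le_rfl, zero_le_one, by simpa using hlo, by simpa using hhi⟩
  · exact ⟨1, zero_le_one, le_rfl, by push_cast; linarith, by push_cast; linarith⟩

/-- `j - 1` is subtraction in `Fin (n + 1)`, so the top carry `c (Fin.last n)` reappears at
`j = 0`. -/
theorem sum_mul_pow_succ_eq_cyclic {R : Type*} [CommRing R] (n : ℕ) (c : Fin (n + 1) → R)
    (x : R) :
    ∑ j, c j * x ^ ((j : ℕ) + 1) =
      c (Fin.last n) * (x ^ (n + 1) - 1) + ∑ j, c (j - 1) * x ^ (j : ℕ) := by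
  have hzero : (0 : Fin (n + 1)) - 1 = Fin.last n := by rw [zero_sub, ← Fin.neg_last, neg_neg]
  have hsucc (i : Fin n) : i.succ - 1 = i.castSucc := by
    rw [← Fin.coeSucc_eq_succ, add_sub_cancel_right]
  rw [Fin.sum_univ_castSucc, Fin.sum_univ_succ]
  simp only [hzero, hsucc, Fin.val_castSucc, Fin.val_last, Fin.val_zero, Fin.val_succ]
  ring

theorem sum_mul_pow_div_mem_Ioo {p a b : ℝ} (hp : 1 < p) {n : ℕ} {δ : Fin (n + 1) → ℝ}
    (hδ : ∀ j, a < δ j ∧ δ j < b) :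
    (∑ j, δ j * p ^ (j : ℕ)) / (p ^ (n + 1) - 1) ∈ Set.Ioo (a / (p - 1)) (b / (p - 1)) := by
  have hp0 : 0 < p := zero_lt_one.trans hp
  have hP : 0 < ∑ j : Fin (n + 1), p ^ (j : ℕ) :=
    sum_pos (fun j _ => by positivity) univ_nonempty
  have he : p ^ (n + 1) - 1 = (∑ j : Fin (n + 1), p ^ (j : ℕ)) * (p - 1) := by
    rw [Fin.sum_univ_eq_sum_range (fun i => p ^ i), geom_sum_mul]
  rw [Set.mem_Ioo, he, ← div_div, div_lt_div_iff_of_pos_right (sub_pos.2 hp),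
    div_lt_div_iff_of_pos_right (sub_pos.2 hp), lt_div_iff₀ hP, div_lt_iff₀ hP, mul_sum, mul_sum]
  constructor <;> refine sum_lt_sum_of_nonempty univ_nonempty fun j _ => ?_
  · exact mul_lt_mul_of_pos_right (hδ j).1 (by positivity)
  · exact mul_lt_mul_of_pos_right (hδ j).2 (by positivity)

/-- Let `p ≥ 2`, `r ≥ 1`, `d ≥ 0`, `e = p^r - 1`, and let `β_0, …, β_{r-1}` be reals with
each `β_j` in `(d+1, p-d-1)` or in `(-p+d+1, -d-1)`.  Then `(∑ β_j p^j)/e` is `d`-generic: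
there is an integer `m` with `m + d/p < (∑ β_j p^j)/e < m + 1 - d/p`. -/
theorem generic_of_deep_digits
    (p r : ℕ) (hp : 2 ≤ p) (hr : 1 ≤ r) (d : ℝ) (hd : 0 ≤ d)
    (β : Fin r → ℝ)
    (hβ : ∀ j : Fin r,
      (d + 1 < β j ∧ β j < (p : ℝ) - d - 1) ∨
      (-(p : ℝ) + d + 1 < β j ∧ β j < -d - 1)) :
    ∃ m : ℤ,
      (m : ℝ) + d / p < (∑ j : Fin r, β j * (p : ℝ) ^ (j : ℕ)) / ((p : ℝ) ^ r - 1) ∧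
      (∑ j : Fin r, β j * (p : ℝ) ^ (j : ℕ)) / ((p : ℝ) ^ r - 1) < (m : ℝ) + 1 - d / p := by
  obtain ⟨n, rfl⟩ := Nat.exists_eq_add_of_le' hr
  have hp1 : (1 : ℝ) < p := by exact_mod_cast hp
  choose c hc0 hc1 hclo hchi using fun j => exists_carry (p := p)
    ((hβ j).imp_right fun h => ⟨by linarith [h.1], by linarith [h.2]⟩)
  set δ : Fin (n + 1) → ℝ := fun j => β j + c j * p - c (j - 1) with hδ
  have hsum : ∑ j, β j * (p : ℝ) ^ (j : ℕ) =
      ∑ j, δ j * (p : ℝ) ^ (j : ℕ) - c (Fin.last n) * ((p : ℝ) ^ (n + 1) - 1) := by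
    simp only [hδ, add_mul, sub_mul, sum_add_distrib, sum_sub_distrib, mul_assoc, ← pow_succ',
      sum_mul_pow_succ_eq_cyclic n (fun j => (c j : ℝ)) p]
    ring
  have hδd (j : Fin (n + 1)) : d < δ j ∧ δ j < (p - 1) - d := by
    have h0 : (0 : ℝ) ≤ c (j - 1) := by exact_mod_cast hc0 (j - 1)
    have h1 : (c (j - 1) : ℝ) ≤ 1 := by exact_mod_cast hc1 (j - 1)
    exact ⟨by linarith [hclo j], by linarith [hchi j]⟩
  obtain ⟨hlo, hhi⟩ := sum_mul_pow_div_mem_Ioo hp1 hδd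
  rw [sub_div, div_self (sub_pos.2 hp1).ne'] at hhi
  have he : (0 : ℝ) < (p : ℝ) ^ (n + 1) - 1 := sub_pos.2 (one_lt_pow₀ hp1 n.succ_ne_zero)
  have hdp : d / p ≤ d / (p - 1) := div_le_div_of_nonneg_left hd (by linarith) (by linarith)
  refine ⟨-c (Fin.last n), ?_, ?_⟩ <;>
  · rw [hsum, sub_div, mul_div_cancel_right₀ _ he.ne']
    push_cast
    linarith
end

section
/- Let p ≥ 1 be an integer, d ≥ 0 a real number, n and m integers, and t a real number satisfying m + d/p < t < m + 1 − d/p. Then p·⌈n − t⌉ ≥ ⌈p·n − p·t + d⌉, where ⌈·⌉ denotes the ceiling of a real number. -/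
/-!
Since `⌈n - t⌉ = n - ⌊t⌋`, the inequality `⌈p n - p t + d⌉ ≤ p ⌈n - t⌉` says exactly
`p n - p t + d ≤ p (n - ⌊t⌋)`, i.e. `d / p ≤ fract t`. For a `d`-generic `t` the bounds
`m + d/p < t < m + 1 - d/p` force `⌊t⌋ = m` and hence `fract t = t - m > d / p`.
-/

namespace Int

variable {K : Type*} [Field K] [LinearOrder K] [IsStrictOrderedRing K] [FloorRing K]

theorem ceil_intCast_sub (n : ℤ) (t : K) : ⌈(n : K) - t⌉ = n - ⌊t⌋ := by
  rw [sub_eq_add_neg, ceil_intCast_add, ceil_neg, ← sub_eq_add_neg]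

theorem ceil_mul_sub_add_le_mul_ceil_sub_iff {p : ℕ} (hp : 0 < p) (n : ℤ) (t d : K) :
    ⌈(p : K) * n - p * t + d⌉ ≤ (p : ℤ) * ⌈(n : K) - t⌉ ↔ d / p ≤ fract t := by
  have hp' : (0 : K) < p := by exact_mod_cast hp
  rw [ceil_le, ceil_intCast_sub, div_le_iff₀ hp', ← self_sub_floor]
  push_cast
  constructor <;> intro h <;> linarith

theorem floor_eq_of_lt_of_lt_sub {m : ℤ} {t e : K} (he : 0 ≤ e) (h₁ : m + e < t)
    (h₂ : t < m + 1 - e) : ⌊t⌋ = m :=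
  floor_eq_iff.mpr ⟨by linarith, by linarith⟩

end Int

/-- If `t` is `d`-generic, i.e. `m + d/p < t < m + 1 - d/p` for some integer `m`, then
`p·⌈n - t⌉ ≥ ⌈p·n - p·t + d⌉` for every integer `n`. -/
theorem ceil_contraction_of_generic
    (p : ℕ) (hp : 1 ≤ p) (d : ℝ) (hd : 0 ≤ d) (n m : ℤ) (t : ℝ)
    (h1 : (m : ℝ) + d / p < t) (h2 : t < (m : ℝ) + 1 - d / p) :
    (p : ℤ) * ⌈(n : ℝ) - t⌉ ≥ ⌈(p : ℝ) * (n : ℝ) - (p : ℝ) * t + d⌉ := by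
  have hdp : 0 ≤ d / p := div_nonneg hd p.cast_nonneg
  have hfloor : ⌊t⌋ = m := Int.floor_eq_of_lt_of_lt_sub hdp h1 h2
  refine (Int.ceil_mul_sub_add_le_mul_ceil_sub_iff hp n t d).mpr ?_
  rw [← Int.self_sub_floor, hfloor]
  linarith
end

section
/- Let p be a prime number and R a commutative ring (we write p for p·1_R). Let A be the localization of the polynomial ring R[X] at the multiplicative set of powers of X + p, and let s ∈ A denote the inverse of X + p. Then the R-algebra homomorphism ev : R[W] → A determined by ev(W) = s is injective, and for every g ∈ R[W] one has ev(g) ∈ X·A if and only if g lies in the ideal of R[W] generated by 1 − p·W. Equivalently, inside A the intersection of the subring R[s] with the ideal X·A equals the ideal of R[s] generated by X·s = 1 − p·s. -/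
/-!
Write `Y = X + p`, so that `s = Y⁻¹` and, for `N ≥ deg g`, `g(s) = Y^{-N} · (reflect N g)(Y)`.
Injectivity follows because `Y` is monic, hence a non-zero-divisor, and reflecting and
substituting `X ↦ X + p` are injective. In the localization, `F(Y) ∈ X·A` iff
`X ∣ Y^m F(Y)` in `R[X]` for some `m`, i.e. iff `p^m · (reflect N g)(p) = 0`, and the left-hand
side is `(reflect (N + m) g)(p)`. Finally, in `R[W]/(1 - pW)` the class of `W` is inverted by `p`,
so there `g = (reflect M g)(p) · W^M` for every `M ≥ deg g`.
-/

open Polynomial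

noncomputable abbrev LocAtXAddP (R : Type*) [CommRing R] (p : ℕ) : Type _ :=
  Localization (Submonoid.powers (Polynomial.X + (p : Polynomial R)))

namespace Polynomial

theorem eval₂_reflect_mul_pow_of_mul_eq_one {R S : Type*} [Semiring R] [CommSemiring S]
    (i : R →+* S) {x y : S} (hxy : x * y = 1) {N : ℕ} {f : R[X]} (hf : f.natDegree ≤ N) :
    eval₂ i y (reflect N f) * x ^ N = eval₂ i x f := by
  let := invertibleOfRightInverse x y hxy
  exact eval₂_reflect_mul_pow i x N f hf

variable {R : Type*} [CommRing R]

theorem eval_reflect_add {f : R[X]} {N : ℕ} (hf : f.natDegree ≤ N) (m : ℕ) (c : R) :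
    (reflect (N + m) f).eval c = (reflect N f).eval c * c ^ m := by
  have h := reflect_mul f 1 hf (natDegree_one.trans_le m.zero_le)
  rw [mul_one, reflect_one] at h
  rw [h, eval_mul, eval_pow, eval_X]

theorem mem_span_one_sub_C_mul_X_of_eval_reflect_eq_zero {c : R} {f : R[X]} {N : ℕ}
    (hf : f.natDegree ≤ N) (h : (reflect N f).eval c = 0) :
    f ∈ Ideal.span {1 - C c * X} := by
  rw [← Ideal.Quotient.eq_zero_iff_mem]
  set π := Ideal.Quotient.mk (Ideal.span {1 - C c * X})
  have hX : π X * (π.comp C) c = 1 := by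
    have h1 : π (1 - C c * X) = 0 :=
      Ideal.Quotient.eq_zero_iff_mem.2 (Ideal.mem_span_singleton_self _)
    rw [map_sub, map_one, map_mul, sub_eq_zero] at h1
    exact (mul_comm _ _).trans h1.symm
  calc π f = eval₂ (π.comp C) (π X) f := by rw [← hom_eval₂, eval₂_C_X]
    _ = eval₂ (π.comp C) ((π.comp C) c) (reflect N f) * π X ^ N :=
      (eval₂_reflect_mul_pow_of_mul_eq_one _ hX hf).symm
    _ = 0 := by rw [eval₂_at_apply, h, map_zero, zero_mul]

end Polynomial

theorem IsLocalization.Away.algebraMap_mem_span_singleton_iff {R A : Type*} [CommRing R]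
    [CommRing A] [Algebra R A] (f : R) [IsLocalization.Away f A] (a x : R) :
    algebraMap R A x ∈ Ideal.span {algebraMap R A a} ↔ ∃ m : ℕ, a ∣ f ^ m * x := by
  rw [← Set.image_singleton, ← Ideal.map_span,
    IsLocalization.algebraMap_mem_map_algebraMap_iff (Submonoid.powers f)]
  simp [Submonoid.mem_powers_iff, Ideal.mem_span_singleton]

section LocalizationAwayXAddC

variable {R A : Type*} [CommRing R] [CommRing A] [Algebra R[X] A] {c : R} {s : A}

theorem algebraMap_comp_X_add_C_mem_span_X_iff [IsLocalization.Away (X + C c) A] (F : R[X]) :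
    algebraMap R[X] A (F.comp (X + C c)) ∈ Ideal.span {algebraMap R[X] A X} ↔
      ∃ m : ℕ, F.eval c * c ^ m = 0 := by
  simp [IsLocalization.Away.algebraMap_mem_span_singleton_iff (X + C c), X_dvd_iff,
    coeff_zero_eq_eval_zero, eval_comp, mul_comm]

theorem eval₂_inv_X_add_C_eq (hs : s * algebraMap R[X] A (X + C c) = 1) (g : R[X]) :
    g.eval₂ ((algebraMap R[X] A).comp C) s =
      algebraMap R[X] A ((reflect g.natDegree g).comp (X + C c)) * s ^ g.natDegree := by
  rw [← eval₂_reflect_mul_pow_of_mul_eq_one _ hs le_rfl, comp, hom_eval₂]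

theorem eval₂_inv_X_add_C_injective [IsLocalization.Away (X + C c) A]
    (hs : s * algebraMap R[X] A (X + C c) = 1) :
    Function.Injective (eval₂RingHom ((algebraMap R[X] A).comp C) s) := by
  have hφ : Function.Injective (algebraMap R[X] A) :=
    IsLocalization.injective (M := Submonoid.powers (X + C c)) A
      (Submonoid.powers_le.2 (monic_X_add_C c).mem_nonZeroDivisors)
  refine (injective_iff_map_eq_zero _).2 fun g hg => ?_
  rw [coe_eval₂RingHom, eval₂_inv_X_add_C_eq hs,
    IsUnit.mul_left_eq_zero ((IsUnit.of_mul_eq_one _ hs).pow _), ← map_zero (algebraMap R[X] A),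
    hφ.eq_iff, comp_X_add_C_eq_zero_iff, reflect_eq_zero_iff] at hg
  exact hg

theorem eval₂_inv_X_add_C_mem_span_X_iff [IsLocalization.Away (X + C c) A]
    (hs : s * algebraMap R[X] A (X + C c) = 1) (g : R[X]) :
    g.eval₂ ((algebraMap R[X] A).comp C) s ∈ Ideal.span {algebraMap R[X] A X} ↔
      g ∈ Ideal.span {1 - C c * X} := by
  constructor
  · rw [eval₂_inv_X_add_C_eq hs, Ideal.mul_unit_mem_iff_mem _ ((IsUnit.of_mul_eq_one _ hs).pow _),
      algebraMap_comp_X_add_C_mem_span_X_iff]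
    rintro ⟨m, hm⟩
    exact mem_span_one_sub_C_mul_X_of_eval_reflect_eq_zero (g.natDegree.le_add_right m)
      (by rw [eval_reflect_add le_rfl, hm])
  · intro hg
    obtain ⟨u, rfl⟩ := Ideal.mem_span_singleton'.mp hg
    have hX : eval₂ ((algebraMap R[X] A).comp C) s (1 - C c * X) = s * algebraMap R[X] A X := by
      rw [map_add] at hs
      simp only [eval₂_sub, eval₂_one, eval₂_mul, eval₂_C, eval₂_X, RingHom.comp_apply]
      linear_combination -hs
    rw [eval₂_mul, hX, ← mul_assoc]
    exact Ideal.mul_mem_left _ _ (Ideal.mem_span_singleton_self _)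

end LocalizationAwayXAddC

theorem eval_inverse_injective_and_mem_X_ideal_iff_general
    {R : Type*} [CommRing R] (p : ℕ)
    (s : LocAtXAddP R p)
    (hs : s * algebraMap (Polynomial R) (LocAtXAddP R p)
        (Polynomial.X + (p : Polynomial R)) = 1) :
    Function.Injective
      (Polynomial.eval₂RingHom
        ((algebraMap (Polynomial R) (LocAtXAddP R p)).comp (Polynomial.C : R →+* Polynomial R))
        s) ∧
    ∀ g : Polynomial R,
      (Polynomial.eval₂RingHom
          ((algebraMap (Polynomial R) (LocAtXAddP R p)).comp (Polynomial.C : R →+* Polynomial R))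
          s) g ∈
        Ideal.span
          ({algebraMap (Polynomial R) (LocAtXAddP R p) Polynomial.X} : Set (LocAtXAddP R p)) ↔
      g ∈ Ideal.span ({1 - (p : Polynomial R) * Polynomial.X} : Set (Polynomial R)) := by
  have hXp : (X + (p : R[X])) = X + C (p : R) := by rw [map_natCast]
  have : IsLocalization.Away (X + C (p : R)) (LocAtXAddP R p) := by
    rw [IsLocalization.Away, ← hXp]; infer_instance
  have hs' : s * algebraMap R[X] (LocAtXAddP R p) (X + C (p : R)) = 1 := by rwa [← hXp]
  refine ⟨eval₂_inv_X_add_C_injective hs', fun g => ?_⟩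
  rw [coe_eval₂RingHom, eval₂_inv_X_add_C_mem_span_X_iff hs', map_natCast]

/-- Let `A = R[X][1/(X+p)]` and let `s ∈ A` be the inverse of `X + p`.  Then the
`R`-algebra map `ev : R[W] → A` with `ev W = s` is injective, and for `g ∈ R[W]` one
has `ev g ∈ X·A` if and only if `g` lies in the ideal generated by `1 - p·W`. -/
theorem eval_inverse_injective_and_mem_X_ideal_iff
    {R : Type*} [CommRing R] (p : ℕ) (hp : p.Prime)
    (s : LocAtXAddP R p)
    (hs : s * algebraMap (Polynomial R) (LocAtXAddP R p)
        (Polynomial.X + (p : Polynomial R)) = 1) :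
    Function.Injective
      (Polynomial.eval₂RingHom
        ((algebraMap (Polynomial R) (LocAtXAddP R p)).comp (Polynomial.C : R →+* Polynomial R))
        s) ∧
    ∀ g : Polynomial R,
      (Polynomial.eval₂RingHom
          ((algebraMap (Polynomial R) (LocAtXAddP R p)).comp (Polynomial.C : R →+* Polynomial R))
          s) g ∈
        Ideal.span
          ({algebraMap (Polynomial R) (LocAtXAddP R p) Polynomial.X} : Set (LocAtXAddP R p)) ↔
      g ∈ Ideal.span ({1 - (p : Polynomial R) * Polynomial.X} : Set (Polynomial R)) :=
  eval_inverse_injective_and_mem_X_ideal_iff_general p s hs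
end
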